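/- arXiv:2211.02839 — 4 statements merged into one kernel-verified Lean document; each statement's English description precedes it below -/
import Mathlib

section
/- If the 4×4 matrix A (as defined) is positive semidefinite, then 1 + 2Re(x·ȳ·t) ≥ |x|² + |y|² + |t|². -/
open Matrix Complex ComplexOrder
open scoped ComplexConjugate

/-! A principal 3×3 submatrix of a positive semidefinite matrix is positive semidefinite, and for a
unit-diagonal Hermitian 3×3 matrix the determinant is `1 + 2 Re(a b̄ c) - |a|² - |b|² - |c|²`. -/

variable {𝕜 : Type*} [RCLike 𝕜]

lemma det_fin_three_of_unit_diagonal_hermitian (a b c : 𝕜) :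
    (!![1, a, b; conj a, 1, c; conj b, conj c, 1] : Matrix (Fin 3) (Fin 3) 𝕜).det =
      ((1 + 2 * RCLike.re (a * conj b * c) - ‖a‖ ^ 2 - ‖b‖ ^ 2 - ‖c‖ ^ 2 : ℝ) : 𝕜) := by
  rw [det_fin_three]
  apply RCLike.ext <;> simp [RCLike.norm_sq_eq_def] <;> ring

lemma Matrix.PosSemidef.norm_sq_add_le_of_diag_eq_one {n : Type*} [Fintype n]
    {C : Matrix n n 𝕜} (hC : C.PosSemidef) (hdiag : ∀ i, C i i = 1) (i j k : n) :
    ‖C i j‖ ^ 2 + ‖C i k‖ ^ 2 + ‖C j k‖ ^ 2 ≤ 1 + 2 * RCLike.re (C i j * conj (C i k) * C j k) := by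
  have hB : (!![1, C i j, C i k; conj (C i j), 1, C j k; conj (C i k), conj (C j k), 1] :
      Matrix (Fin 3) (Fin 3) 𝕜).PosSemidef := by
    convert hC.submatrix ![i, j, k] using 1
    ext a b
    fin_cases a <;> fin_cases b <;>
      simp [hdiag, ← hC.isHermitian.apply j i, ← hC.isHermitian.apply k i,
        ← hC.isHermitian.apply k j]
  have hdet := hB.det_nonneg
  rw [det_fin_three_of_unit_diagonal_hermitian, RCLike.ofReal_nonneg] at hdet
  linarith

theorem lemma1_y1 (x y z t u w : ℂ)
    (hA : (!![1, x, y, z;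
              (starRingEnd ℂ) x, 1, t, u;
              (starRingEnd ℂ) y, (starRingEnd ℂ) t, 1, w;
              (starRingEnd ℂ) z, (starRingEnd ℂ) u, (starRingEnd ℂ) w, 1] :
            Matrix (Fin 4) (Fin 4) ℂ).PosSemidef) :
    1 + 2 * (x * (starRingEnd ℂ) y * t).re ≥ ‖x‖ ^ 2 + ‖y‖ ^ 2 + ‖t‖ ^ 2 := by
  simpa using hA.norm_sq_add_le_of_diag_eq_one (fun i ↦ by fin_cases i <;> rfl) 0 1 2
end

section
/- If the 4×4 matrix A (as defined) is positive semidefinite, then per(A) ≥ 1 + 2Re(x·ȳ·t) + |x|² + |y|² + |t|², and moreover 1 + 2Re(x·ȳ·t) + |x|² + |y|² + |t|² ≥ 0. -/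
/-!
Split the permutations of `Fin 4` according to where the last row and column go. Those fixing `3`
contribute `per A' * A 3 3`, where `A'` is the leading `3 × 3` block. Each of the others pairs
an entry `A i 3` and an entry `A 3 j` with a `2 × 2` permanent of `A'`, and the sum of these terms
is half the quadratic form of `A ⊗ₖ A` at a symmetric tensor built from the last row. The Kronecker
square of a positive semidefinite matrix is positive semidefinite, so `per A' * A 3 3 ≤ per A`
(the case `3 + 1` of Lieb's permanental inequality). For a correlation matrix the bound
in the theorem is `per A'`, which is at least `1` because `|x ȳ t| ≤ |x| |y| ≤ (|x|² + |y|²) / 2`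
once `|t| ≤ 1`.
-/

open Matrix Equiv Finset Complex ComplexOrder
open scoped Kronecker

section Permanent

variable {R : Type*} [CommSemiring R]

theorem Matrix.permanent_fin_three (M : Matrix (Fin 3) (Fin 3) R) :
    M.permanent =
      M 0 0 * M 1 1 * M 2 2 + M 0 0 * M 2 1 * M 1 2 + M 1 0 * M 0 1 * M 2 2 +
      M 1 0 * M 2 1 * M 0 2 + M 2 0 * M 0 1 * M 1 2 + M 2 0 * M 1 1 * M 0 2 := by
  simp only [permanent, univ_perm_fin_succ, ← univ_product_univ, sum_map, sum_product,
    toEmbedding_apply, Fin.sum_univ_succ, Fin.prod_univ_succ, univ_unique, sum_singleton,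
    Perm.decomposeFin_symm_apply_zero, Perm.decomposeFin_symm_apply_succ]
  simp only [Fin.isValue, swap_self, refl_apply, swap_apply_right, swap_apply_of_ne_of_ne,
    Fin.succ_zero_eq_one, Fin.succ_one_eq_two, Perm.default_eq, Fin.default_eq_zero, Perm.coe_one,
    id_eq, prod_singleton, ne_eq, Fin.reduceEq, not_false_eq_true]
  ring

theorem Matrix.permanent_fin_four (M : Matrix (Fin 4) (Fin 4) R) :
    M.permanent =
      M 0 0 * M 1 1 * M 2 2 * M 3 3 + M 0 0 * M 1 1 * M 3 2 * M 2 3 +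
      M 0 0 * M 2 1 * M 1 2 * M 3 3 + M 0 0 * M 2 1 * M 3 2 * M 1 3 +
      M 0 0 * M 3 1 * M 1 2 * M 2 3 + M 0 0 * M 3 1 * M 2 2 * M 1 3 +
      M 1 0 * M 0 1 * M 2 2 * M 3 3 + M 1 0 * M 0 1 * M 3 2 * M 2 3 +
      M 1 0 * M 2 1 * M 0 2 * M 3 3 + M 1 0 * M 2 1 * M 3 2 * M 0 3 +
      M 1 0 * M 3 1 * M 0 2 * M 2 3 + M 1 0 * M 3 1 * M 2 2 * M 0 3 +
      M 2 0 * M 0 1 * M 1 2 * M 3 3 + M 2 0 * M 0 1 * M 3 2 * M 1 3 +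
      M 2 0 * M 1 1 * M 0 2 * M 3 3 + M 2 0 * M 1 1 * M 3 2 * M 0 3 +
      M 2 0 * M 3 1 * M 0 2 * M 1 3 + M 2 0 * M 3 1 * M 1 2 * M 0 3 +
      M 3 0 * M 0 1 * M 1 2 * M 2 3 + M 3 0 * M 0 1 * M 2 2 * M 1 3 +
      M 3 0 * M 1 1 * M 0 2 * M 2 3 + M 3 0 * M 1 1 * M 2 2 * M 0 3 +
      M 3 0 * M 2 1 * M 0 2 * M 1 3 + M 3 0 * M 2 1 * M 1 2 * M 0 3 := by
  simp only [permanent, univ_perm_fin_succ, ← univ_product_univ, sum_map, sum_product,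
    toEmbedding_apply, Fin.sum_univ_succ, Fin.prod_univ_succ, univ_unique, sum_singleton,
    Perm.decomposeFin_symm_apply_zero, Perm.decomposeFin_symm_apply_succ]
  simp only [Fin.isValue, swap_self, refl_apply, swap_apply_right, swap_apply_of_ne_of_ne,
    Fin.succ_zero_eq_one, Fin.succ_one_eq_two, Fin.reduceSucc, Perm.default_eq, Fin.default_eq_zero,
    Perm.coe_one, id_eq, prod_singleton, ne_eq, Fin.reduceEq, not_false_eq_true]
  ring

end Permanent

/-- The symmetric tensor `∑ₖ M 3 k • (eᵢ ⊗ eⱼ + eⱼ ⊗ eᵢ)`, where `{i, j, k} = {0, 1, 2}`. -/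
def symmetrizedLastRow {R : Type*} [Zero R] (M : Matrix (Fin 4) (Fin 4) R) : Fin 4 × Fin 4 → R :=
  fun p => !![0, M 3 2, M 3 1, 0; M 3 2, 0, M 3 0, 0; M 3 1, M 3 0, 0, 0; 0, 0, 0, 0] p.1 p.2

theorem Matrix.IsHermitian.two_mul_permanent_fin_four {R : Type*} [CommSemiring R] [StarRing R]
    {M : Matrix (Fin 4) (Fin 4) R} (hM : M.IsHermitian) :
    2 * M.permanent = 2 * ((M.submatrix Fin.castSucc Fin.castSucc).permanent * M 3 3) +
      star (symmetrizedLastRow M) ⬝ᵥ (M ⊗ₖ M) *ᵥ symmetrizedLastRow M := by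
  simp only [permanent_fin_four, permanent_fin_three, symmetrizedLastRow, dotProduct, mulVec,
    Fintype.sum_prod_type, Fin.sum_univ_four, kroneckerMap_apply, Pi.star_apply]
  simp only [Fin.isValue, submatrix_apply, Fin.castSucc_zero, Fin.castSucc_one,
    Fin.reduceCastSucc, of_apply, cons_val', cons_val_zero, cons_val_fin_one, star_zero, mul_zero,
    cons_val_one, zero_add, cons_val, add_zero, zero_mul, hM.apply 2 3, hM.apply 1 3, hM.apply 0 3]
  ring

section PosSemidef

variable {𝕜 : Type*} [RCLike 𝕜]

theorem Matrix.PosSemidef.permanent_submatrix_castSucc_mul_le {M : Matrix (Fin 4) (Fin 4) 𝕜}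
    (hM : M.PosSemidef) :
    (M.submatrix Fin.castSucc Fin.castSucc).permanent * M 3 3 ≤ M.permanent := by
  have hper : M.permanent = (M.submatrix Fin.castSucc Fin.castSucc).permanent * M 3 3 +
      2⁻¹ * (star (symmetrizedLastRow M) ⬝ᵥ (M ⊗ₖ M) *ᵥ symmetrizedLastRow M) := by
    linear_combination (2⁻¹ : 𝕜) * hM.isHermitian.two_mul_permanent_fin_four
  rw [hper]
  exact le_add_of_nonneg_right <| mul_nonneg (inv_nonneg.mpr zero_le_two) <|
    (hM.kronecker hM).dotProduct_mulVec_nonneg _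

theorem Matrix.PosSemidef.norm_sq_apply_le {n : Type*} [Fintype n] [DecidableEq n]
    {M : Matrix n n 𝕜} (hM : M.PosSemidef) (i j : n) :
    ((‖M i j‖ ^ 2 : ℝ) : 𝕜) ≤ M i i * M j j := by
  have hdet := (hM.submatrix ![i, j]).det_nonneg
  rw [det_fin_two] at hdet
  simp only [submatrix_apply, cons_val_zero, cons_val_one] at hdet
  rwa [RCLike.ofReal_pow, ← RCLike.mul_conj, starRingEnd_apply, hM.isHermitian.apply j i,
    ← sub_nonneg]

end PosSemidef

theorem lemma2_y1 (x y z t u w : ℂ)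
    (A : Matrix (Fin 4) (Fin 4) ℂ)
    (hAdef : A = !![1, x, y, z;
                    (starRingEnd ℂ) x, 1, t, u;
                    (starRingEnd ℂ) y, (starRingEnd ℂ) t, 1, w;
                    (starRingEnd ℂ) z, (starRingEnd ℂ) u, (starRingEnd ℂ) w, 1])
    (hA : A.PosSemidef) :
    ((1 + 2 * (x * (starRingEnd ℂ) y * t).re + ‖x‖ ^ 2 + ‖y‖ ^ 2 + ‖t‖ ^ 2 : ℝ) : ℂ) ≤ A.permanent ∧
      (0 : ℝ) ≤ 1 + 2 * (x * (starRingEnd ℂ) y * t).re + ‖x‖ ^ 2 + ‖y‖ ^ 2 + ‖t‖ ^ 2 := by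
  have hblock : (A.submatrix Fin.castSucc Fin.castSucc).permanent * A 3 3 =
      ((1 + 2 * (x * (starRingEnd ℂ) y * t).re + ‖x‖ ^ 2 + ‖y‖ ^ 2 + ‖t‖ ^ 2 : ℝ) : ℂ) := by
    push_cast
    rw [permanent_fin_three, re_eq_add_conj, ← mul_conj', ← mul_conj', ← mul_conj']
    simp only [hAdef, Fin.isValue, submatrix_apply, Fin.castSucc_zero, Fin.castSucc_one,
      Fin.reduceCastSucc, of_apply, cons_val', cons_val_zero, cons_val_fin_one, cons_val_one,
      Matrix.cons_val, map_mul, conj_conj]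
    ring
  have ht : ‖t‖ ^ 2 ≤ 1 :=
    real_le_real.mp (by simpa [hAdef] using hA.norm_sq_apply_le 1 2)
  have hre : -(‖x‖ * ‖y‖ * ‖t‖) ≤ (x * (starRingEnd ℂ) y * t).re := by
    simpa using neg_le_of_abs_le (abs_re_le_norm (x * (starRingEnd ℂ) y * t))
  refine ⟨hblock ▸ hA.permanent_submatrix_castSucc_mul_le, ?_⟩
  nlinarith [sq_nonneg (‖x‖ - ‖y‖), norm_nonneg x, norm_nonneg y, norm_nonneg t]
end

section
/- If the 4×4 matrix A (as defined) is positive semidefinite, then per(A) ≥ 1 + 2Re(x·u·z̄) + |x|² + |z|² + |u|², and moreover 1 + 2Re(x·u·z̄) + |x|² + |z|² + |u|² ≥ 0. -/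
/-!
Let `B` be `A` with row and column `2` deleted: the correlation matrix of `x, z, u`, whose
permanent is the right-hand side. Expanding along row and column `2` gives
`per A = per B + ∑ i j, A i 2 * A 2 j * per B(i|j)`, where `B(i|j)` is `B` without row `i` and
column `j`. Each `per B(i|j)` is a sum of two products of entries of `B`, so the double sum is
`½ v* (B ⊗ B) v` for a vector `v` built from row `2`; as `B ⊗ B` is positive semidefinite,
`per A ≥ per B`. Finally `per B = 1 + |x|² + (z, u)* [[1, x], [x̄, 1]] (z, u) ≥ 0`.
-/

open Matrix Complex ComplexOrder ComplexConjugate Kronecker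

namespace Matrix

section CommSemiring

variable {R : Type*} [CommSemiring R]

theorem permanent_submatrix_swap_succ {n : ℕ} (A : Matrix (Fin (n + 1)) (Fin (n + 1)) R)
    (p : Fin (n + 1)) :
    (A.submatrix (fun k => Equiv.swap 0 p k.succ) Fin.succ).permanent =
      (A.submatrix p.succAbove Fin.succ).permanent := by
  cases p using Fin.cases with
  | zero => simp
  | succ i =>
    rw [← permanent_permute_cols (Fin.cycleRange i) (A.submatrix i.succ.succAbove Fin.succ),
      submatrix_submatrix]
    simp only [Function.comp_def, Fin.succAbove_cycleRange, id]

theorem permanent_succ_column_zero {n : ℕ} (A : Matrix (Fin (n + 1)) (Fin (n + 1)) R) :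
    A.permanent = ∑ i, A i 0 * (A.submatrix i.succAbove Fin.succ).permanent := by
  rw [permanent, ← (Equiv.Perm.decomposeFin (n := n)).symm.sum_comp, Fintype.sum_prod_type]
  refine Finset.sum_congr rfl fun p _ => ?_
  rw [← permanent_submatrix_swap_succ, permanent, Finset.mul_sum]
  refine Finset.sum_congr rfl fun σ _ => ?_
  simp [Fin.prod_univ_succ]

theorem permanent_fin_three_s7 (A : Matrix (Fin 3) (Fin 3) R) :
    A.permanent =
      A 0 0 * A 1 1 * A 2 2 + A 0 0 * A 1 2 * A 2 1 + A 0 1 * A 1 0 * A 2 2 +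
      A 0 1 * A 1 2 * A 2 0 + A 0 2 * A 1 0 * A 2 1 + A 0 2 * A 1 1 * A 2 0 := by
  simp only [permanent_succ_column_zero, Nat.reduceAdd, Fin.isValue, submatrix_apply,
    Fin.succ_zero_eq_one, submatrix_submatrix, permanent_unique, Fin.default_eq_zero,
    Function.comp_apply, Fin.succ_one_eq_two, Fin.sum_univ_succ, Fin.zero_succAbove,
    Finset.univ_unique, ne_eq, Fin.succ_ne_zero, not_false_eq_true, Fin.succAbove_ne_zero_zero,
    Finset.sum_singleton, Fin.succ_succAbove_one]
  ring

/-- `(k, l) ↦ ∑ m, |ε k l m| * c m`. For a `3 × 3` matrix `M`, the coefficient of `c i * c' j` in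
`absLeviCivitaVec c ⬝ᵥ (M ⊗ₖ M) *ᵥ absLeviCivitaVec c'` is twice the permanent of `M` with row `i`
and column `j` deleted. -/
def absLeviCivitaVec (c : Fin 3 → R) : Fin 3 × Fin 3 → R :=
  fun p => !![0, c 2, c 1; c 2, 0, c 0; c 1, c 0, 0] p.1 p.2

theorem two_mul_permanent_fin_four (A : Matrix (Fin 4) (Fin 4) R) (k : Fin 4) :
    2 * A.permanent = 2 * A k k * (A.submatrix k.succAbove k.succAbove).permanent +
      absLeviCivitaVec (fun i => A (k.succAbove i) k) ⬝ᵥ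
        (A.submatrix k.succAbove k.succAbove ⊗ₖ A.submatrix k.succAbove k.succAbove) *ᵥ
          absLeviCivitaVec (fun j => A k (k.succAbove j)) := by
  fin_cases k <;>
  simp +decide only [permanent_succ_column_zero, Nat.reduceAdd, Fin.isValue, submatrix_apply,
      Fin.succAbove, Fin.succ_zero_eq_one, submatrix_submatrix, Function.comp_apply,
      Fin.succ_one_eq_two, permanent_unique, Fin.default_eq_zero, Fin.castSucc_zero,
      Fin.reduceSucc, Fin.sum_univ_succ, ↓reduceIte, Fin.castSucc_one, Finset.univ_unique,
      Fin.castSucc_succ, Fin.succ_pos, Finset.sum_singleton, Fin.reduceCastSucc, Fin.zero_eta,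
      Fin.succAbove_zero, dotProduct, absLeviCivitaVec, of_apply, cons_val', cons_val_fin_one,
      mulVec, kroneckerMap_apply, Fintype.sum_prod_type, cons_val_zero, cons_val_succ, mul_zero,
      zero_add, add_zero, zero_mul, Fin.mk_one, Fin.lt_one_iff, Fin.castSucc_eq_zero_iff,
      ite_eq_left_iff, not_lt, nonpos_iff_eq_zero, imp_false, ite_not, Fin.succ_ne_zero,
      Fin.reduceFinMk, Fin.reduceLT] <;>
  ring

theorem star_absLeviCivitaVec [StarRing R] (c : Fin 3 → R) :
    star (absLeviCivitaVec c) = absLeviCivitaVec (star c) := by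
  ext ⟨k, l⟩
  fin_cases k <;> fin_cases l <;> simp [absLeviCivitaVec]

end CommSemiring

theorem PosSemidef.mul_permanent_submatrix_succAbove_le {𝕜 : Type*} [RCLike 𝕜]
    {A : Matrix (Fin 4) (Fin 4) 𝕜} (hA : A.PosSemidef) (k : Fin 4) :
    A k k * (A.submatrix k.succAbove k.succAbove).permanent ≤ A.permanent := by
  set B := A.submatrix k.succAbove k.succAbove
  set v := absLeviCivitaVec fun j => A k (k.succAbove j)
  have hcol : absLeviCivitaVec (fun i => A (k.succAbove i) k) = star v := by
    rw [star_absLeviCivitaVec]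
    congr 1
    ext i
    exact (hA.isHermitian.apply _ _).symm
  have hq : 0 ≤ star v ⬝ᵥ (B ⊗ₖ B) *ᵥ v :=
    ((hA.submatrix _).kronecker (hA.submatrix _)).dotProduct_mulVec_nonneg v
  have h2 : 2 * (A k k * B.permanent) ≤ 2 * A.permanent := by
    rw [two_mul_permanent_fin_four A k, hcol, mul_assoc]
    exact le_add_of_nonneg_right hq
  exact le_of_mul_le_mul_left h2 two_pos

end Matrix

theorem lemma2_y2 (x y z t u w : ℂ)
    (A : Matrix (Fin 4) (Fin 4) ℂ)
    (hAdef : A = !![1, x, y, z;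
                    (starRingEnd ℂ) x, 1, t, u;
                    (starRingEnd ℂ) y, (starRingEnd ℂ) t, 1, w;
                    (starRingEnd ℂ) z, (starRingEnd ℂ) u, (starRingEnd ℂ) w, 1])
    (hA : A.PosSemidef) :
    ((1 + 2 * (x * u * (starRingEnd ℂ) z).re + ‖x‖ ^ 2 + ‖z‖ ^ 2 + ‖u‖ ^ 2 : ℝ) : ℂ) ≤ A.permanent ∧
      (0 : ℝ) ≤ 1 + 2 * (x * u * (starRingEnd ℂ) z).re + ‖x‖ ^ 2 + ‖z‖ ^ 2 + ‖u‖ ^ 2 := by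
  have hre : ((2 * (x * u * conj z).re : ℝ) : ℂ) = x * u * conj z + conj x * conj u * z := by
    rw [← add_conj]
    simp
  have hperB : (A.submatrix (Fin.succAbove 2) (Fin.succAbove 2)).permanent =
      ((1 + 2 * (x * u * conj z).re + ‖x‖ ^ 2 + ‖z‖ ^ 2 + ‖u‖ ^ 2 : ℝ) : ℂ) := by
    subst hAdef
    rw [permanent_fin_three_s7]
    push_cast [hre, ← mul_conj']
    simp only [Fin.isValue, submatrix_apply, Fin.succAbove, Nat.reduceAdd, Fin.castSucc_zero,
      Fin.reduceLT, ↓reduceIte, of_apply, cons_val', cons_val_zero, cons_val_fin_one,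
      Fin.castSucc_one, cons_val_one, mul_one, Fin.reduceCastSucc, lt_self_iff_false,
      Fin.reduceSucc, cons_val, one_mul]
    ring
  have hquad : star ![z, u] ⬝ᵥ A.submatrix ![0, 1] ![0, 1] *ᵥ ![z, u] =
      ((2 * (x * u * conj z).re + ‖z‖ ^ 2 + ‖u‖ ^ 2 : ℝ) : ℂ) := by
    subst hAdef
    push_cast [hre, ← mul_conj']
    simp only [dotProduct, Pi.star_apply, RCLike.star_def, mulVec, Fin.isValue, submatrix_apply,
      of_apply, cons_val', cons_val_fin_one, Fin.sum_univ_two, cons_val_zero, cons_val_one, one_mul]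
    ring
  constructor
  · have h22 : A 2 2 = 1 := by simp [hAdef]
    simpa [h22, hperB] using hA.mul_permanent_submatrix_succAbove_le 2
  · have hq := (hA.submatrix ![0, 1]).dotProduct_mulVec_nonneg ![z, u]
    rw [hquad, zero_le_real] at hq
    linarith [sq_nonneg ‖x‖]
end

section
/- Let x, y, z, t, u, w be complex numbers each of modulus at most 1, and suppose |x|²+|y|²+|t|² < 1, |x|²+|z|²+|u|² < 1, |y|²+|z|²+|w|² < 1, and |t|²+|u|²+|w|² < 1. Then, with T := |x|² + |y|² + |z|² + |t|² + |u|² + |w|², one has T ≥ |x|⁴ + |y|⁴ + |z|⁴ + |t|⁴ + |u|⁴ + |w|⁴ + 3(|xyt|² + |xzu|² + |yzw|² + |twu|²). -/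
/-! The six quantities `|x|², …, |w|²` sit on the edges of a tetrahedron whose faces are the four
triples in the hypotheses, and every edge lies on exactly two faces. Hence the claim is half the sum
of the per-face bounds `a² + b² + c² + 6abc ≤ a + b + c` for `a, b, c ≥ 0` with `a + b + c ≤ 1`,
which follow from `(a + b + c)² ≤ a + b + c` and `abc ≤ ab, bc, ca`. -/

theorem sq_add_sq_add_sq_add_six_mul_le_add {R : Type*} [CommRing R] [LinearOrder R]
    [IsStrictOrderedRing R] {a b c : R} (ha : 0 ≤ a) (hb : 0 ≤ b) (hc : 0 ≤ c)
    (hsum : a + b + c ≤ 1) :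
    a ^ 2 + b ^ 2 + c ^ 2 + 6 * (a * b * c) ≤ a + b + c := by
  have habc : a * b * c ≤ a * b := mul_le_of_le_one_right (mul_nonneg ha hb) (by linarith)
  have hbca : b * c * a ≤ b * c := mul_le_of_le_one_right (mul_nonneg hb hc) (by linarith)
  have hcab : c * a * b ≤ c * a := mul_le_of_le_one_right (mul_nonneg hc ha) (by linarith)
  have hsq : (a + b + c) ^ 2 ≤ a + b + c := by
    rw [sq]
    exact mul_le_of_le_one_left (add_nonneg (add_nonneg ha hb) hc) hsum
  linear_combination hsq + 2 * habc + 2 * hbca + 2 * hcab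

theorem T_bound_general (x y z t u w : ℂ)
    (h1 : ‖x‖ ^ 2 + ‖y‖ ^ 2 + ‖t‖ ^ 2 < 1)
    (h2 : ‖x‖ ^ 2 + ‖z‖ ^ 2 + ‖u‖ ^ 2 < 1)
    (h3 : ‖y‖ ^ 2 + ‖z‖ ^ 2 + ‖w‖ ^ 2 < 1)
    (h4 : ‖t‖ ^ 2 + ‖u‖ ^ 2 + ‖w‖ ^ 2 < 1) :
    ‖x‖ ^ 2 + ‖y‖ ^ 2 + ‖z‖ ^ 2
        + ‖t‖ ^ 2 + ‖u‖ ^ 2 + ‖w‖ ^ 2 ≥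
      ‖x‖ ^ 4 + ‖y‖ ^ 4 + ‖z‖ ^ 4
        + ‖t‖ ^ 4 + ‖u‖ ^ 4 + ‖w‖ ^ 4
        + 3 * (‖x * y * t‖ ^ 2 + ‖x * z * u‖ ^ 2
            + ‖y * z * w‖ ^ 2 + ‖t * w * u‖ ^ 2) := by
  have face {a b c : ℂ} (h : ‖a‖ ^ 2 + ‖b‖ ^ 2 + ‖c‖ ^ 2 < 1) :
      ‖a‖ ^ 4 + ‖b‖ ^ 4 + ‖c‖ ^ 4 + 6 * ‖a * b * c‖ ^ 2 ≤ ‖a‖ ^ 2 + ‖b‖ ^ 2 + ‖c‖ ^ 2 := by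
    have := sq_add_sq_add_sq_add_six_mul_le_add (sq_nonneg ‖a‖) (sq_nonneg ‖b‖) (sq_nonneg ‖c‖)
      h.le
    simp only [norm_mul, mul_pow, ← pow_mul] at this ⊢
    exact this
  rw [mul_right_comm t w u]
  linear_combination (face h1 + face h2 + face h3 + face h4) / 2

theorem T_bound (x y z t u w : ℂ)
    (hx : ‖x‖ ≤ 1) (hy : ‖y‖ ≤ 1) (hz : ‖z‖ ≤ 1)
    (ht : ‖t‖ ≤ 1) (hu : ‖u‖ ≤ 1) (hw : ‖w‖ ≤ 1)
    (h1 : ‖x‖ ^ 2 + ‖y‖ ^ 2 + ‖t‖ ^ 2 < 1)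
    (h2 : ‖x‖ ^ 2 + ‖z‖ ^ 2 + ‖u‖ ^ 2 < 1)
    (h3 : ‖y‖ ^ 2 + ‖z‖ ^ 2 + ‖w‖ ^ 2 < 1)
    (h4 : ‖t‖ ^ 2 + ‖u‖ ^ 2 + ‖w‖ ^ 2 < 1) :
    ‖x‖ ^ 2 + ‖y‖ ^ 2 + ‖z‖ ^ 2
        + ‖t‖ ^ 2 + ‖u‖ ^ 2 + ‖w‖ ^ 2 ≥
      ‖x‖ ^ 4 + ‖y‖ ^ 4 + ‖z‖ ^ 4
        + ‖t‖ ^ 4 + ‖u‖ ^ 4 + ‖w‖ ^ 4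
        + 3 * (‖x * y * t‖ ^ 2 + ‖x * z * u‖ ^ 2
            + ‖y * z * w‖ ^ 2 + ‖t * w * u‖ ^ 2) :=
  T_bound_general x y z t u w h1 h2 h3 h4
end
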